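/- arXiv:2510.14650 — 2 statements merged into one kernel-verified Lean document; each statement's English description precedes it below -/
import Mathlib

section
/- Let A_1, …, A_{m−1} be a skew Clifford system on ℝ^{n+1}, let F(x,y) = ⟨x,y⟩² + Σ_{q=1}^{m−1} ⟨A_q x, y⟩², and let a, b > 0. For x, y ∈ ℝ^{n+1} with ‖x‖ = a and ‖y‖ = b, the gradient of F tangential to S^n(a) × S^n(b), namely ∇̄F = DF − (⟨DF,(x,0)⟩/a²)(x,0) − (⟨DF,(0,y)⟩/b²)(0,y) where DF is the Euclidean gradient, satisfies ‖∇̄F‖² = 4F(a² + b²) − 4F²(1/a² + 1/b²); in particular ⟨DF,(x,0)⟩ = ⟨DF,(0,y)⟩ = 2F. -/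
open Matrix
open scoped RealInnerProductSpace BigOperators

noncomputable section

/-- A skew Clifford system `A_1, …, A_{m-1}` on `ℝ^N`: skew-symmetric matrices with
`A_p A_q + A_q A_p = -2 δ_{pq} Id`. -/
def IsSkewCliffordSystem {N m : ℕ} (A : Fin (m - 1) → Matrix (Fin N) (Fin N) ℝ) : Prop :=
  (∀ p q, A p * A q + A q * A p =
      if p = q then (-2 : ℝ) • (1 : Matrix (Fin N) (Fin N) ℝ) else 0) ∧
  (∀ p, (A p)ᵀ = -A p)

/-- The action of a matrix on Euclidean space. -/
def act {N : ℕ} (A : Matrix (Fin N) (Fin N) ℝ) (x : EuclideanSpace ℝ (Fin N)) :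
    EuclideanSpace ℝ (Fin N) :=
  Matrix.toEuclideanLin A x

/-- The splitting form of the FKM isoparametric polynomial:
`F(x,y) = ⟨x,y⟩² + Σ_q ⟨A_q x, y⟩²`. -/
def FKM {N m : ℕ} (A : Fin (m - 1) → Matrix (Fin N) (Fin N) ℝ)
    (x y : EuclideanSpace ℝ (Fin N)) : ℝ :=
  ⟪x, y⟫ ^ 2 + ∑ q, ⟪act (A q) x, y⟫ ^ 2

/-! The Clifford relations make `x, A_1 x, …, A_{m-1} x` orthogonal, each of norm `‖x‖`, and
`F(x, y) = Σ_i ⟨e_i, y⟩²` for this frame `(e_i)`. Hence the `y`-gradient `G = 2 Σ_i ⟨e_i, y⟩ e_i`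
satisfies `⟨G, y⟩ = 2F` (Euler) and `‖G‖² = 4‖x‖²F`. Skewness gives `F(x, y) = F(y, x)`, so the
same holds for the `x`-gradient with the roles of `x` and `y` exchanged, and the tangential
part of a vector `G` along the sphere through `y` has squared norm `‖G‖² - ⟨G, y⟩²/‖y‖²`. -/

section SumOfSquaredInners

variable {E ι : Type*} [NormedAddCommGroup E] [InnerProductSpace ℝ E] [Fintype ι]

theorem hasGradientAt_sum_inner_sq [CompleteSpace E] (v : ι → E) (u : E) :
    HasGradientAt (fun u' => ∑ i, ⟪v i, u'⟫ ^ 2) (∑ i, (2 * ⟪v i, u⟫) • v i) u := by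
  rw [hasGradientAt_iff_hasFDerivAt]
  refine (HasFDerivAt.fun_sum fun i _ => ((innerSL ℝ (v i)).hasFDerivAt.pow 2)).congr_fderiv ?_
  ext z
  simp [real_inner_comm]

theorem inner_sum_smul_inner_self (v : ι → E) (u : E) :
    ⟪∑ i, (2 * ⟪v i, u⟫) • v i, u⟫ = 2 * ∑ i, ⟪v i, u⟫ ^ 2 := by
  simp only [sum_inner, real_inner_smul_left, Finset.mul_sum]
  exact Finset.sum_congr rfl fun i _ => by ring

theorem norm_sum_smul_sq_of_inner_eq_ite [DecidableEq ι] {v : ι → E} {r : ℝ}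
    (hv : ∀ i j, ⟪v i, v j⟫ = if i = j then r ^ 2 else 0) (c : ι → ℝ) :
    ‖∑ i, c i • v i‖ ^ 2 = r ^ 2 * ∑ i, c i ^ 2 := by
  rw [← real_inner_self_eq_norm_sq]
  simp only [sum_inner, inner_sum, real_inner_smul_left, real_inner_smul_right, hv,
    mul_ite, mul_zero, Finset.sum_ite_eq', Finset.mem_univ, if_true, Finset.mul_sum]
  exact Finset.sum_congr rfl fun i _ => by ring

end SumOfSquaredInners

theorem norm_sub_inner_div_smul_sq {E : Type*} [NormedAddCommGroup E] [InnerProductSpace ℝ E]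
    (g x : E) :
    ‖g - (⟪g, x⟫ / ‖x‖ ^ 2) • x‖ ^ 2 = ‖g‖ ^ 2 - ⟪g, x⟫ ^ 2 / ‖x‖ ^ 2 := by
  rcases eq_or_ne x 0 with rfl | hx
  · simp
  have hx2 : ‖x‖ ^ 2 ≠ 0 := by positivity
  rw [norm_sub_sq_real, real_inner_smul_right, norm_smul, mul_pow, Real.norm_eq_abs, sq_abs]
  field_simp
  ring

section Clifford

variable {N m : ℕ} {A : Fin (m - 1) → Matrix (Fin N) (Fin N) ℝ}

theorem inner_act_left (M : Matrix (Fin N) (Fin N) ℝ) (u v : EuclideanSpace ℝ (Fin N)) :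
    ⟪act M u, v⟫ = ⟪u, act Mᵀ v⟫ := by
  rw [← Matrix.conjTranspose_eq_transpose_of_trivial, act, act,
    Matrix.toEuclideanLin_conjTranspose_eq_adjoint, LinearMap.adjoint_inner_right]

theorem act_mul (M P : Matrix (Fin N) (Fin N) ℝ) (z : EuclideanSpace ℝ (Fin N)) :
    act (M * P) z = act M (act P z) := by
  simp [act]

theorem inner_act_add_inner_act_comm (M P : Matrix (Fin N) (Fin N) ℝ)
    (z : EuclideanSpace ℝ (Fin N)) :
    ⟪act M z, act P z⟫ + ⟪act P z, act M z⟫ = ⟪z, act (Mᵀ * P + Pᵀ * M) z⟫ := by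
  rw [inner_act_left, inner_act_left, ← act_mul, ← act_mul, act, act, act, map_add,
    LinearMap.add_apply, inner_add_right]

theorem IsSkewCliffordSystem.inner_act_left (hA : IsSkewCliffordSystem A) (q : Fin (m - 1))
    (u v : EuclideanSpace ℝ (Fin N)) : ⟪act (A q) u, v⟫ = -⟪u, act (A q) v⟫ := by
  rw [_root_.inner_act_left, hA.2, act, map_neg, LinearMap.neg_apply, inner_neg_right, act]

theorem IsSkewCliffordSystem.inner_act_self (hA : IsSkewCliffordSystem A) (q : Fin (m - 1))
    (z : EuclideanSpace ℝ (Fin N)) : ⟪z, act (A q) z⟫ = 0 := by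
  have h := hA.inner_act_left q z z
  rw [real_inner_comm] at h
  linarith

theorem IsSkewCliffordSystem.inner_act_act (hA : IsSkewCliffordSystem A) (p q : Fin (m - 1))
    (z : EuclideanSpace ℝ (Fin N)) :
    ⟪act (A p) z, act (A q) z⟫ = if p = q then ‖z‖ ^ 2 else 0 := by
  have h := inner_act_add_inner_act_comm (A p) (A q) z
  rw [real_inner_comm (act (A p) z) (act (A q) z), hA.2, hA.2, neg_mul, neg_mul, ← neg_add,
    hA.1 p q] at h
  split_ifs at h ⊢ with hpq
  · subst hpq
    rw [real_inner_self_eq_norm_sq]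
    simp [act, real_inner_smul_right] at h
    rw [act]
    linarith
  · simpa [act] using h

def cliffordFrame (A : Fin (m - 1) → Matrix (Fin N) (Fin N) ℝ) (z : EuclideanSpace ℝ (Fin N)) :
    Option (Fin (m - 1)) → EuclideanSpace ℝ (Fin N)
  | none => z
  | some q => act (A q) z

theorem FKM_eq_sum_cliffordFrame (A : Fin (m - 1) → Matrix (Fin N) (Fin N) ℝ)
    (x y : EuclideanSpace ℝ (Fin N)) :
    FKM A x y = ∑ i, ⟪cliffordFrame A x i, y⟫ ^ 2 := by
  rw [Fintype.sum_option]
  rfl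

theorem IsSkewCliffordSystem.FKM_comm (hA : IsSkewCliffordSystem A)
    (x y : EuclideanSpace ℝ (Fin N)) : FKM A x y = FKM A y x := by
  unfold FKM
  rw [real_inner_comm x y]
  congr 1
  exact Finset.sum_congr rfl fun q _ => by rw [hA.inner_act_left, neg_sq, real_inner_comm]

theorem IsSkewCliffordSystem.inner_cliffordFrame (hA : IsSkewCliffordSystem A)
    (z : EuclideanSpace ℝ (Fin N)) (i j : Option (Fin (m - 1))) :
    ⟪cliffordFrame A z i, cliffordFrame A z j⟫ = if i = j then ‖z‖ ^ 2 else 0 := by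
  rcases i with _ | p <;> rcases j with _ | q
  · exact (real_inner_self_eq_norm_sq z).trans (if_pos rfl).symm
  · simp [cliffordFrame, hA.inner_act_self]
  · simp [cliffordFrame, real_inner_comm z, hA.inner_act_self]
  · simp [cliffordFrame, hA.inner_act_act]

end Clifford

section FKMGradient

variable {N m : ℕ} {A : Fin (m - 1) → Matrix (Fin N) (Fin N) ℝ}

theorem hasGradientAt_FKM_right (A : Fin (m - 1) → Matrix (Fin N) (Fin N) ℝ)
    (x y : EuclideanSpace ℝ (Fin N)) :
    HasGradientAt (fun y' => FKM A x y')
      (∑ i, (2 * ⟪cliffordFrame A x i, y⟫) • cliffordFrame A x i) y := by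
  simp only [FKM_eq_sum_cliffordFrame]
  exact hasGradientAt_sum_inner_sq _ y

theorem inner_gradient_FKM_right (A : Fin (m - 1) → Matrix (Fin N) (Fin N) ℝ)
    (x y : EuclideanSpace ℝ (Fin N)) :
    ⟪gradient (fun y' => FKM A x y') y, y⟫ = 2 * FKM A x y := by
  rw [(hasGradientAt_FKM_right A x y).gradient, inner_sum_smul_inner_self,
    FKM_eq_sum_cliffordFrame]

theorem IsSkewCliffordSystem.norm_gradient_FKM_right_sq (hA : IsSkewCliffordSystem A)
    (x y : EuclideanSpace ℝ (Fin N)) :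
    ‖gradient (fun y' => FKM A x y') y‖ ^ 2 = 4 * ‖x‖ ^ 2 * FKM A x y := by
  rw [(hasGradientAt_FKM_right A x y).gradient,
    norm_sum_smul_sq_of_inner_eq_ite (hA.inner_cliffordFrame x), FKM_eq_sum_cliffordFrame,
    Finset.mul_sum, Finset.mul_sum]
  exact Finset.sum_congr rfl fun i _ => by ring

end FKMGradient

theorem stmt4_general (n m : ℕ)
    (A : Fin (m - 1) → Matrix (Fin (n + 1)) (Fin (n + 1)) ℝ)
    (hA : IsSkewCliffordSystem A)
    (a b : ℝ)
    (x y : EuclideanSpace ℝ (Fin (n + 1))) (hx : ‖x‖ = a) (hy : ‖y‖ = b) :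
    ⟪gradient (fun x' => FKM A x' y) x, x⟫ = 2 * FKM A x y ∧
    ⟪gradient (fun y' => FKM A x y') y, y⟫ = 2 * FKM A x y ∧
    ‖gradient (fun x' => FKM A x' y) x -
        (⟪gradient (fun x' => FKM A x' y) x, x⟫ / a ^ 2) • x‖ ^ 2 +
      ‖gradient (fun y' => FKM A x y') y -
        (⟪gradient (fun y' => FKM A x y') y, y⟫ / b ^ 2) • y‖ ^ 2 =
      4 * FKM A x y * (a ^ 2 + b ^ 2) -
        4 * (FKM A x y) ^ 2 * (1 / a ^ 2 + 1 / b ^ 2) := by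
  subst hx hy
  have hswap : (fun x' => FKM A x' y) = fun x' => FKM A y x' :=
    funext fun x' => hA.FKM_comm x' y
  rw [hswap, norm_sub_inner_div_smul_sq, norm_sub_inner_div_smul_sq,
    hA.norm_gradient_FKM_right_sq, hA.norm_gradient_FKM_right_sq, inner_gradient_FKM_right,
    inner_gradient_FKM_right, hA.FKM_comm y x]
  exact ⟨rfl, rfl, by ring⟩

/-- for `‖x‖ = a`, `‖y‖ = b` (`a, b > 0`), the gradient of `F` tangential to
`S^n(a) × S^n(b)`, `∇̄F = DF − (⟨DF,(x,0)⟩/a²)(x,0) − (⟨DF,(0,y)⟩/b²)(0,y)`, satisfies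
`‖∇̄F‖² = 4F(a² + b²) − 4F²(1/a² + 1/b²)`; in particular
`⟨DF,(x,0)⟩ = ⟨DF,(0,y)⟩ = 2F`.  Here `DF = (Gx, Gy)` is the full Euclidean gradient,
`Gx`, `Gy` being the gradients of `F` in the `x`- and `y`-variables, so that
`⟨DF,(x,0)⟩ = ⟨Gx, x⟩`, `⟨DF,(0,y)⟩ = ⟨Gy, y⟩` and
`‖∇̄F‖² = ‖Gx − (⟨Gx,x⟩/a²) x‖² + ‖Gy − (⟨Gy,y⟩/b²) y‖²`. -/
theorem stmt4 (n m : ℕ) (hn : 1 ≤ n) (hm : 1 ≤ m)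
    (A : Fin (m - 1) → Matrix (Fin (n + 1)) (Fin (n + 1)) ℝ)
    (hA : IsSkewCliffordSystem A)
    (a b : ℝ) (ha : 0 < a) (hb : 0 < b)
    (x y : EuclideanSpace ℝ (Fin (n + 1))) (hx : ‖x‖ = a) (hy : ‖y‖ = b) :
    ⟪gradient (fun x' => FKM A x' y) x, x⟫ = 2 * FKM A x y ∧
    ⟪gradient (fun y' => FKM A x y') y, y⟫ = 2 * FKM A x y ∧
    ‖gradient (fun x' => FKM A x' y) x -
        (⟪gradient (fun x' => FKM A x' y) x, x⟫ / a ^ 2) • x‖ ^ 2 +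
      ‖gradient (fun y' => FKM A x y') y -
        (⟪gradient (fun y' => FKM A x y') y, y⟫ / b ^ 2) • y‖ ^ 2 =
      4 * FKM A x y * (a ^ 2 + b ^ 2) -
        4 * (FKM A x y) ^ 2 * (1 / a ^ 2 + 1 / b ^ 2) :=
  stmt4_general n m A hA a b x y hx hy
end
end

section
/- Let n > m ≥ 2 be integers, let A_1, …, A_{m−1} be a skew Clifford system on ℝ^{n+1}, set c = (m−1)/(n−1) and F(x,y) = ⟨x,y⟩² + Σ_{q=1}^{m−1} ⟨A_q x, y⟩². Suppose ‖x‖ = ‖y‖ = 1 and F(x,y) = c; write B_p = ⟨A_p x, y⟩. For real numbers θ ∈ (0, π) and α, set t = sinθ sinα/√(c(1−c)), r = cosθ + sinθ cosα − ct, s = cosθ − sinθ cosα − ct, and x̃ = r x + t(⟨x,y⟩ y + Σ_p B_p A_pᵀ y), ỹ = s y + t(⟨x,y⟩ x + Σ_p B_p A_p x). If ‖x̃‖ = ‖ỹ‖ = 1, then cosθ = 0 or cosα = 0. -/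
open Matrix
open scoped RealInnerProductSpace BigOperators

noncomputable section

lemma act_mul_apply {N : ℕ} (M M' : Matrix (Fin N) (Fin N) ℝ) (w : EuclideanSpace ℝ (Fin N)) :
    act (M * M') w = act M (act M' w) := by
  simp [act, Matrix.toEuclideanLin_apply, Matrix.mulVec_mulVec]

lemma act_neg {N : ℕ} (M : Matrix (Fin N) (Fin N) ℝ) (w : EuclideanSpace ℝ (Fin N)) :
    act (-M) w = -act M w := by
  simp [act]

lemma act_add {N : ℕ} (M M' : Matrix (Fin N) (Fin N) ℝ) (w : EuclideanSpace ℝ (Fin N)) :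
    act (M + M') w = act M w + act M' w := by
  simp [act]

lemma act_smul {N : ℕ} (a : ℝ) (M : Matrix (Fin N) (Fin N) ℝ) (w : EuclideanSpace ℝ (Fin N)) :
    act (a • M) w = a • act M w := by
  simp [act]

lemma act_one {N : ℕ} (w : EuclideanSpace ℝ (Fin N)) : act (1 : Matrix (Fin N) (Fin N) ℝ) w = w := by
  simp [act, Matrix.toEuclideanLin_apply]

lemma act_zero {N : ℕ} (w : EuclideanSpace ℝ (Fin N)) : act (0 : Matrix (Fin N) (Fin N) ℝ) w = 0 := by
  simp [act]

lemma inner_act_transpose {N : ℕ} (M : Matrix (Fin N) (Fin N) ℝ)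
    (a b : EuclideanSpace ℝ (Fin N)) : ⟪act Mᵀ a, b⟫ = ⟪a, act M b⟫ := by
  have h : Mᵀ = Mᴴ := by
    ext i j; simp [Matrix.conjTranspose_apply]
  rw [act, act, h, Matrix.toEuclideanLin_conjTranspose_eq_adjoint,
    LinearMap.adjoint_inner_left]

lemma inner_act_left_skew {N : ℕ} {M : Matrix (Fin N) (Fin N) ℝ} (hM : Mᵀ = -M)
    (a b : EuclideanSpace ℝ (Fin N)) : ⟪act M a, b⟫ = -⟪a, act M b⟫ := by
  have h1 : ⟪act Mᵀ a, b⟫ = ⟪a, act M b⟫ := inner_act_transpose M a b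
  rw [hM, act_neg] at h1
  rw [← h1, inner_neg_left]; ring

lemma skew_self_inner {N : ℕ} {M : Matrix (Fin N) (Fin N) ℝ} (hM : Mᵀ = -M)
    (w : EuclideanSpace ℝ (Fin N)) : ⟪w, act M w⟫ = 0 := by
  have h := inner_act_left_skew hM w w
  have h2 := real_inner_comm w (act M w)
  linarith

lemma clifford_inner {N m : ℕ} {A : Fin (m - 1) → Matrix (Fin N) (Fin N) ℝ}
    (hA : IsSkewCliffordSystem A) (p q : Fin (m - 1)) (w : EuclideanSpace ℝ (Fin N)) :
    ⟪act (A p) w, act (A q) w⟫ = if p = q then ‖w‖ ^ 2 else 0 := by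
  have e1 : ⟪act (A p) w, act (A q) w⟫ = -⟪w, act (A p * A q) w⟫ := by
    rw [inner_act_left_skew (hA.2 p), act_mul_apply]
  have e2 : ⟪act (A p) w, act (A q) w⟫ = -⟪w, act (A q * A p) w⟫ := by
    rw [real_inner_comm, inner_act_left_skew (hA.2 q), act_mul_apply]
  have hsum : act (A p * A q) w + act (A q * A p) w
      = if p = q then (-2 : ℝ) • w else 0 := by
    rw [← act_add, hA.1 p q]
    split_ifs
    · rw [act_smul, act_one]
    · exact act_zero w
  have h2 : ⟪w, act (A p * A q) w⟫ + ⟪w, act (A q * A p) w⟫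
      = if p = q then -2 * ‖w‖ ^ 2 else 0 := by
    rw [← inner_add_right, hsum]
    split_ifs
    · rw [real_inner_smul_right, real_inner_self_eq_norm_sq]
      try ring
    · exact inner_zero_right w
  split_ifs at h2 ⊢ with h
  · nlinarith [e1, e2, h2]
  · linarith [e1, e2, h2]

set_option maxHeartbeats 1000000 in
/-- with `c = (m−1)/(n−1)`, `‖x‖ = ‖y‖ = 1`, `F(x,y) = c`,
`B_p = ⟨A_p x, y⟩`, `θ ∈ (0,π)`, `t = sinθ sinα/√(c(1−c))`,
`r = cosθ + sinθ cosα − ct`, `s = cosθ − sinθ cosα − ct`,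
`x̃ = r x + t(⟨x,y⟩y + Σ_p B_p A_pᵀ y)`, `ỹ = s y + t(⟨x,y⟩x + Σ_p B_p A_p x)`:
if `‖x̃‖ = ‖ỹ‖ = 1`, then `cos θ = 0` or `cos α = 0`. -/
theorem stmt10 (n m : ℕ) (hm : 2 ≤ m) (hmn : m < n)
    (A : Fin (m - 1) → Matrix (Fin (n + 1)) (Fin (n + 1)) ℝ)
    (hA : IsSkewCliffordSystem A)
    (c : ℝ) (hc : c = ((m : ℝ) - 1) / ((n : ℝ) - 1))
    (x y : EuclideanSpace ℝ (Fin (n + 1))) (hx : ‖x‖ = 1) (hy : ‖y‖ = 1)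
    (hF : FKM A x y = c)
    (θ α : ℝ) (hθ : θ ∈ Set.Ioo 0 Real.pi)
    (t r s : ℝ)
    (ht : t = Real.sin θ * Real.sin α / Real.sqrt (c * (1 - c)))
    (hr : r = Real.cos θ + Real.sin θ * Real.cos α - c * t)
    (hs : s = Real.cos θ - Real.sin θ * Real.cos α - c * t)
    (xt yt : EuclideanSpace ℝ (Fin (n + 1)))
    (hxt : xt = r • x + t • (⟪x, y⟫ • y + ∑ p, ⟪act (A p) x, y⟫ • act (A p)ᵀ y))
    (hyt : yt = s • y + t • (⟪x, y⟫ • x + ∑ p, ⟪act (A p) x, y⟫ • act (A p) x))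
    (hxt1 : ‖xt‖ = 1) (hyt1 : ‖yt‖ = 1) :
    Real.cos θ = 0 ∨ Real.cos α = 0 := by
  obtain ⟨hθ0, hθπ⟩ := hθ
  have hx2 : ⟪x, x⟫ = (1 : ℝ) := by rw [real_inner_self_eq_norm_sq, hx]; norm_num
  have hy2 : ⟪y, y⟫ = (1 : ℝ) := by rw [real_inner_self_eq_norm_sq, hy]; norm_num
  have hzz_y : ∀ p q, ⟪act (A p) y, act (A q) y⟫ = if p = q then (1 : ℝ) else 0 := by
    intro p q; rw [clifford_inner hA, hy]; simp
  have hzz_x : ∀ p q, ⟪act (A p) x, act (A q) x⟫ = if p = q then (1 : ℝ) else 0 := by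
    intro p q; rw [clifford_inner hA, hx]; simp
  have hskew_x : ∀ p, ⟪x, act (A p) x⟫ = 0 := fun p => skew_self_inner (hA.2 p) x
  have hskew_y : ∀ p, ⟪y, act (A p) y⟫ = 0 := fun p => skew_self_inner (hA.2 p) y
  have htr : ∀ p (w : EuclideanSpace ℝ (Fin (n + 1))), act (A p)ᵀ w = -act (A p) w := by
    intro p w; rw [hA.2 p, act_neg]
  have hBdef : ∀ p, ⟪x, act (A p)ᵀ y⟫ = ⟪act (A p) x, y⟫ := by
    intro p; rw [real_inner_comm, inner_act_transpose, real_inner_comm]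
  have hFc' : ⟪x, y⟫ * ⟪x, y⟫ + ∑ q, ⟪act (A q) x, y⟫ * ⟪act (A q) x, y⟫ = c := by
    rw [← hF]; simp [FKM, pow_two]
  set u := ⟪x, y⟫ • y + ∑ p, ⟪act (A p) x, y⟫ • act (A p)ᵀ y with hu
  set v := ⟪x, y⟫ • x + ∑ p, ⟪act (A p) x, y⟫ • act (A p) x with hv
  have hxu : ⟪x, u⟫ = c := by
    rw [hu, inner_add_right, real_inner_smul_right, inner_sum]
    simp only [real_inner_smul_right, hBdef]
    exact hFc'
  have hyv : ⟪y, v⟫ = c := by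
    have c1 : ⟪y, x⟫ = ⟪x, y⟫ := real_inner_comm x y
    have c2 : ∀ p, ⟪y, act (A p) x⟫ = ⟪act (A p) x, y⟫ := fun p => real_inner_comm _ _
    rw [hv, inner_add_right, real_inner_smul_right, inner_sum]
    simp only [real_inner_smul_right, c1, c2]
    exact hFc'
  have huu : ⟪u, u⟫ = c := by
    rw [hu]
    simp only [htr]
    rw [real_inner_add_add_self]
    simp only [real_inner_smul_left, real_inner_smul_right, inner_sum, sum_inner,
      inner_neg_left, inner_neg_right, hskew_y, hy2, hzz_y, mul_ite, mul_one, mul_zero,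
      mul_neg, neg_neg, neg_zero, Finset.sum_ite_eq', Finset.mem_univ, if_true,
      Finset.sum_const_zero]
    linarith [hFc']
  have hvv : ⟪v, v⟫ = c := by
    rw [hv, real_inner_add_add_self]
    simp only [real_inner_smul_left, real_inner_smul_right, inner_sum, sum_inner,
      hskew_x, hx2, hzz_x, mul_ite, mul_one, mul_zero,
      Finset.sum_ite_eq', Finset.mem_univ, if_true, Finset.sum_const_zero]
    linarith [hFc']
  have hxtn : r ^ 2 + 2 * (r * t) * c + t ^ 2 * c = 1 := by
    have h1 : ⟪xt, xt⟫ = (1 : ℝ) := by rw [real_inner_self_eq_norm_sq, hxt1]; norm_num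
    rw [hxt, real_inner_add_add_self] at h1
    simp only [real_inner_smul_left, real_inner_smul_right] at h1
    rw [hx2, hxu, huu] at h1
    linear_combination h1
  have hytn : s ^ 2 + 2 * (s * t) * c + t ^ 2 * c = 1 := by
    have h1 : ⟪yt, yt⟫ = (1 : ℝ) := by rw [real_inner_self_eq_norm_sq, hyt1]; norm_num
    rw [hyt, real_inner_add_add_self] at h1
    simp only [real_inner_smul_left, real_inner_smul_right] at h1
    rw [hy2, hyv, hvv] at h1
    linear_combination h1
  have hfact : (r - s) * (r + s + 2 * t * c) = 0 := by linear_combination hxtn - hytn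
  rw [hr, hs] at hfact
  have hsin : 0 < Real.sin θ := Real.sin_pos_of_pos_of_lt_pi hθ0 hθπ
  have h6 : Real.sin θ * (Real.cos α * Real.cos θ) = 0 := by linear_combination hfact / 4
  rcases mul_eq_zero.mp h6 with h | h
  · exact absurd h (ne_of_gt hsin)
  · rcases mul_eq_zero.mp h with h' | h'
    · exact Or.inr h'
    · exact Or.inl h'
end
end
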